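/- arXiv:2304.14595 — 5 statements merged into one kernel-verified Lean document; each statement's English description precedes it below -/
import Mathlib

section
/- For m ≥ 2, a nonzero digit y ∈ {1,...,m-1}, a word w over {0,...,m-1} with first letter nonzero, and integers r, k with 0 ≤ r < m^k and k ≥ |w|, the number of occurrences of w in the base-m expansion of r + y·m^k exceeds the number of occurrences of w in the base-m expansion of r by either 0 or 1. -/
/-- Number of occurrences of the word `w` as a factor of the word `x`. -/
def occCount (w x : List ℕ) : ℕ :=
  (List.range (x.length + 1)).countP (fun i => decide (w <+: x.drop i))

/-- Base-`m` expansion of `n`, most significant digit first, with `0` written as the digit `0`. -/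
def baseExp (m n : ℕ) : List ℕ :=
  if n = 0 then [0] else (Nat.digits m n).reverse

/-- `e_{m;w}(n)`: number of occurrences of `w` in the base-`m` expansion of `n`. -/
def eCount (m : ℕ) (w : List ℕ) (n : ℕ) : ℕ := occCount w (baseExp m n)

/-- `a_{m;w}(n) = e_{m;w}(n) mod m`. -/
def aSeq (m : ℕ) (w : List ℕ) (n : ℕ) : ℕ := eCount m w n % m

/-- The value `(w)_m` of the digit string `w` in base `m`. -/
def wordVal (m : ℕ) (w : List ℕ) : ℕ := w.foldl (fun acc d => acc * m + d) 0

/-- The finite word `v` is a prefix of the infinite sequence `s`. -/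
def IsPrefixSeq (v : List ℕ) (s : ℕ → ℕ) : Prop := ∀ n < v.length, s n = v.getD n 0


lemma occCount_nil (w : List ℕ) (hw : w ≠ []) : occCount w [] = 0 := by
  simp [occCount, List.range_succ, hw]

lemma occCount_cons (w : List ℕ) (a : ℕ) (x : List ℕ) :
    occCount w (a :: x) = (if w <+: a :: x then 1 else 0) + occCount w x := by
  simp only [occCount, List.length_cons, List.range_succ_eq_map, List.countP_cons,
    List.countP_map]
  simp [Function.comp_def, add_comm]

lemma occCount_zero_cons (w : List ℕ) (x : List ℕ) (hhead : w.headI ≠ 0) (hw : w ≠ []) :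
    occCount w (0 :: x) = occCount w x := by
  rw [occCount_cons, if_neg, zero_add]
  intro h
  obtain ⟨a, t, rfl⟩ := List.exists_cons_of_ne_nil hw
  obtain ⟨s, hs⟩ := h
  simp only [List.cons_append, List.cons.injEq] at hs
  exact hhead (by simp [hs.1.symm])

lemma occCount_replicate_append (w : List ℕ) (K : ℕ) (x : List ℕ)
    (hhead : w.headI ≠ 0) (hw : w ≠ []) :
    occCount w (List.replicate K 0 ++ x) = occCount w x := by
  induction K with
  | zero => simp
  | succ n ih => rw [List.replicate_succ, List.cons_append, occCount_zero_cons _ _ hhead hw, ih]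

lemma eCount_eq_occCount (m : ℕ) (w : List ℕ) (r : ℕ) (hhead : w.headI ≠ 0) (hw : w ≠ []) :
    eCount m w r = occCount w ((Nat.digits m r).reverse) := by
  rcases eq_or_ne r 0 with rfl | hr
  · simp [eCount, baseExp, occCount_zero_cons _ _ hhead hw, occCount_nil _ hw]
  · simp [eCount, baseExp, hr]

theorem stmt0 (m y k r : ℕ) (w : List ℕ) (hm : 2 ≤ m)
    (hy : 1 ≤ y) (hy' : y < m) (hw : ∀ d ∈ w, d < m) (hhead : w.headI ≠ 0)
    (hr : r < m ^ k) (hk : w.length ≤ k) :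
    eCount m w (r + y * m ^ k) = eCount m w r ∨
      eCount m w (r + y * m ^ k) = eCount m w r + 1 := by
  have hm1 : 1 < m := hm
  have hwne : w ≠ [] := by intro h; exact hhead (by simp [h])
  have hlen : (Nat.digits m r).length ≤ k := by
    rcases eq_or_ne r 0 with rfl | hr0
    · simp
    · rw [Nat.digits_len m r hm1 hr0]
      have : Nat.log m r < k := Nat.log_lt_of_lt_pow hr0 hr
      omega
  have hdig : Nat.digits m y = [y] := by
    rw [Nat.digits_def' hm1 (by omega)]
    simp [Nat.mod_eq_of_lt hy', Nat.div_eq_of_lt hy']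
  have key : Nat.digits m (r + y * m ^ k) =
      Nat.digits m r ++ List.replicate (k - (Nat.digits m r).length) 0 ++ [y] := by
    rw [← hdig, Nat.digits_append_zeroes_append_digits hm1 (by omega)]
    congr 2
    have : (Nat.digits m r).length + (k - (Nat.digits m r).length) = k := by omega
    rw [this]; ring
  have hne : r + y * m ^ k ≠ 0 := by positivity
  have hexp : baseExp m (r + y * m ^ k) =
      y :: (List.replicate (k - (Nat.digits m r).length) 0 ++ (Nat.digits m r).reverse) := by
    rw [baseExp, if_neg hne, key]
    simp
  rw [eCount, hexp, occCount_cons,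
    occCount_replicate_append _ _ _ hhead hwne,
    eCount_eq_occCount m w r hhead hwne]
  split <;> omega
end

section
/- For m ≥ 2, a nonzero digit y, a word w with nonzero first letter, and 0 ≤ r < m^k with k ≥ |w|: e_{m;w}(r + y·m^k) = e_{m;w}(r) + 1 if and only if y = w[0] and the base-m expansion of r, padded with leading zeros to length k, has w[1]...w[|w|-1] as a prefix; equivalently, α_w·m^k ≤ r < β_w·m^k where α_w = (w[1..|w|-1])_m / m^{|w|-1} and β_w = ((w[1..|w|-1])_m + 1) / m^{|w|-1}. -/
lemma wordVal_eq_ofDigits_reverse (m : ℕ) (l : List ℕ) :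
    wordVal m l = Nat.ofDigits m l.reverse := by
  rw [wordVal, ← List.foldr_reverse, Nat.ofDigits_eq_foldr]
  congr 1
  funext d acc
  push_cast
  ring

lemma wordVal_append (m : ℕ) (a b : List ℕ) :
    wordVal m (a ++ b) = wordVal m a * m ^ b.length + wordVal m b := by
  simp only [wordVal_eq_ofDigits_reverse, List.reverse_append, Nat.ofDigits_append,
    List.length_reverse]
  ring

lemma wordVal_lt_pow {m : ℕ} (hm : 1 < m) {l : List ℕ} (hl : ∀ d ∈ l, d < m) :
    wordVal m l < m ^ l.length := by
  rw [wordVal_eq_ofDigits_reverse, ← List.length_reverse]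
  exact Nat.ofDigits_lt_base_pow_length hm (by simpa using hl)

lemma wordVal_inj_of_length_eq {m : ℕ} (hm : 1 < m) {l₁ l₂ : List ℕ}
    (hlen : l₁.length = l₂.length) (h₁ : ∀ d ∈ l₁, d < m) (h₂ : ∀ d ∈ l₂, d < m)
    (h : wordVal m l₁ = wordVal m l₂) : l₁ = l₂ := by
  rw [wordVal_eq_ofDigits_reverse, wordVal_eq_ofDigits_reverse] at h
  exact List.reverse_injective <| Nat.ofDigits_inj_of_len_eq hm (by simpa using hlen)
    (by simpa using h₁) (by simpa using h₂) h

lemma prefix_iff_wordVal_bounds {m : ℕ} (hm : 1 < m) {v s : List ℕ} (hv : ∀ d ∈ v, d < m)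
    (hs : ∀ d ∈ s, d < m) (hlen : v.length ≤ s.length) :
    v <+: s ↔ wordVal m v * m ^ (s.length - v.length) ≤ wordVal m s ∧
      wordVal m s < (wordVal m v + 1) * m ^ (s.length - v.length) := by
  obtain ⟨u, hsu, hu⟩ : ∃ u, s = s.take v.length ++ u ∧ u.length = s.length - v.length :=
    ⟨_, (List.take_append_drop _ s).symm, List.length_drop⟩
  have hu_lt : wordVal m u < m ^ (s.length - v.length) :=
    hu ▸ wordVal_lt_pow hm fun d hd => hs d (hsu ▸ List.mem_append_right _ hd)
  have hval : wordVal m s =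
      wordVal m (s.take v.length) * m ^ (s.length - v.length) + wordVal m u := by
    rw [← hu, ← wordVal_append, ← hsu]
  rw [List.prefix_iff_eq_take, hval, add_one_mul]
  constructor
  · intro h
    rw [← h]
    omega
  · rintro ⟨hlo, hhi⟩
    refine wordVal_inj_of_length_eq hm (by simp [hlen]) hv
      (fun d hd => hs d (List.mem_of_mem_take hd)) (le_antisymm ?_ ?_)
    all_goals
      by_contra! hlt
      nlinarith [Nat.mul_le_mul_right (m ^ (s.length - v.length)) hlt]

def baseExpPadded (m k r : ℕ) : List ℕ :=
  List.replicate (k - (Nat.digits m r).length) 0 ++ (Nat.digits m r).reverse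

lemma length_baseExpPadded {m k r : ℕ} (hm : 1 < m) (hr : r < m ^ k) :
    (baseExpPadded m k r).length = k := by
  have := (Nat.digits_length_le_iff hm r).mpr hr
  simp only [baseExpPadded, List.length_append, List.length_replicate, List.length_reverse]
  omega

lemma baseExpPadded_lt {m : ℕ} (hm : 1 < m) (k r : ℕ) : ∀ d ∈ baseExpPadded m k r, d < m := by
  intro d hd
  simp only [baseExpPadded, List.mem_append, List.mem_replicate, List.mem_reverse] at hd
  rcases hd with ⟨-, rfl⟩ | hd
  · omega
  · exact Nat.digits_lt_base hm hd

lemma wordVal_baseExpPadded (m k r : ℕ) : wordVal m (baseExpPadded m k r) = r := by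
  rw [baseExpPadded, wordVal_append, wordVal_eq_ofDigits_reverse, List.reverse_replicate,
    Nat.ofDigits_replicate_zero, wordVal_eq_ofDigits_reverse, List.reverse_reverse,
    Nat.ofDigits_digits, zero_mul, zero_add]

lemma baseExp_add_mul_pow {m y k r : ℕ} (hm : 1 < m) (hy : 0 < y) (hy' : y < m)
    (hr : r < m ^ k) : baseExp m (r + y * m ^ k) = y :: baseExpPadded m k r := by
  have hlen := (Nat.digits_length_le_iff hm r).mpr hr
  have hdigits := Nat.digits_append_zeroes_append_digits (k := k - (Nat.digits m r).length)
    (n := r) hm hy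
  rw [Nat.digits_of_lt m y hy.ne' hy', Nat.add_sub_cancel' hlen, mul_comm] at hdigits
  rw [baseExp, if_neg (by positivity), ← hdigits, baseExpPadded]
  simp

lemma occCount_replicate_zero_append {w : List ℕ} (hw : w.headI ≠ 0) (z : ℕ) (x : List ℕ) :
    occCount w (List.replicate z 0 ++ x) = occCount w x := by
  induction z with
  | zero => simp
  | succ z ih =>
    rw [List.replicate_succ, List.cons_append, occCount_cons, ih, if_neg, Nat.zero_add]
    rintro ⟨u, hu⟩
    cases w with
    | nil => exact hw rfl
    | cons a t => exact hw (List.cons_eq_cons.mp hu).1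

lemma eCount_eq_occCount_baseExpPadded (m k : ℕ) {w : List ℕ} (hw : w.headI ≠ 0) (r : ℕ) :
    eCount m w r = occCount w (baseExpPadded m k r) := by
  rw [eCount, baseExp, baseExpPadded, occCount_replicate_zero_append hw]
  split_ifs with hr
  · subst hr
    simpa using occCount_replicate_zero_append hw 1 []
  · rfl

theorem stmt1 (m y k r : ℕ) (w : List ℕ) (hm : 2 ≤ m)
    (hy : 1 ≤ y) (hy' : y < m) (hw : ∀ d ∈ w, d < m) (hhead : w.headI ≠ 0)
    (hr : r < m ^ k) (hk : w.length ≤ k) :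
    eCount m w (r + y * m ^ k) = eCount m w r + 1 ↔
      y = w.headI ∧
        wordVal m w.tail * m ^ (k - (w.length - 1)) ≤ r ∧
          r < (wordVal m w.tail + 1) * m ^ (k - (w.length - 1)) := by
  obtain ⟨a, t, rfl⟩ := List.exists_cons_of_ne_nil (fun h : w = [] => hhead (h ▸ rfl))
  have hprefix : a :: t <+: y :: baseExpPadded m k r ↔
      y = a ∧ wordVal m t * m ^ (k - t.length) ≤ r ∧
        r < (wordVal m t + 1) * m ^ (k - t.length) := by
    have hlen := length_baseExpPadded hm hr
    rw [List.cons_prefix_cons, eq_comm, prefix_iff_wordVal_bounds hm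
      (fun d hd => hw d (List.mem_cons_of_mem a hd)) (baseExpPadded_lt hm k r)
      (by rw [hlen]; simp only [List.length_cons] at hk; omega), hlen, wordVal_baseExpPadded]
  rw [eCount, baseExp_add_mul_pow hm hy hy' hr, occCount_cons,
    ← eCount_eq_occCount_baseExpPadded m k hhead]
  simp only [List.headI_cons, List.tail_cons, List.length_cons, Nat.add_sub_cancel, ← hprefix]
  split_ifs with h <;> simp [h, Nat.add_comm]
end

section
/- For m ≥ 2, a word w with nonzero first letter x = w[0], any digit t ∈ {0,...,m-1} with t ≠ x, and any k ≥ |w|: the finite sequence (a_{m;w}(n))_{t·m^k ≤ n < (t+1)·m^k} equals the finite sequence (a_{m;w}(n))_{0 ≤ n < m^k}. -/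
lemma not_prefix_of_head_ne {w : List ℕ} (c : ℕ) (x : List ℕ) (hne : w ≠ [])
    (hh : w.headI ≠ c) : ¬ w <+: (c :: x) := by
  cases w with
  | nil => exact absurd rfl hne
  | cons a ws =>
    rw [List.cons_prefix_cons]
    rintro ⟨rfl, -⟩
    exact hh rfl

lemma occCount_cons_s2 {w : List ℕ} (c : ℕ) (x : List ℕ) (h : ¬ w <+: (c :: x)) :
    occCount w (c :: x) = occCount w x := by
  unfold occCount
  have : (c :: x).length + 1 = (x.length + 1) + 1 := by simp
  rw [this, List.range_succ_eq_map, List.countP_cons, List.countP_map]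
  have h2 : ((fun i => decide (w <+: (c :: x).drop i)) ∘ Nat.succ) =
      (fun i => decide (w <+: x.drop i)) := by
    funext i; simp
  rw [h2]
  simp [h]

lemma occCount_zeros {w : List ℕ} (hne : w ≠ []) (hh : w.headI ≠ 0) (j : ℕ) (x : List ℕ) :
    occCount w (List.replicate j 0 ++ x) = occCount w x := by
  induction j with
  | zero => simp
  | succ j ih =>
    rw [List.replicate_succ, List.cons_append,
      occCount_cons_s2 0 _ (not_prefix_of_head_ne 0 _ hne hh), ih]

theorem stmt2 (m t k : ℕ) (w : List ℕ) (hm : 2 ≤ m)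
    (hw : ∀ d ∈ w, d < m) (hhead : w.headI ≠ 0)
    (ht : t < m) (ht' : t ≠ w.headI) (hk : w.length ≤ k) :
    ∀ r < m ^ k, aSeq m w (t * m ^ k + r) = aSeq m w r := by
  
  have hne : w ≠ [] := by rintro rfl; exact hhead rfl
  intro r hr
  rcases Nat.eq_zero_or_pos t with rfl | htpos
  · simp
  -- t ≠ 0
  have hb : 1 < m := hm
  have hlen : (Nat.digits m r).length ≤ k := by
    rcases Nat.eq_zero_or_pos r with rfl | hrpos
    · simp
    · rw [Nat.digits_len m r hb hrpos.ne']
      exact Nat.succ_le_of_lt (Nat.log_lt_of_lt_pow hrpos.ne' hr)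
  have hdig : Nat.digits m (t * m ^ k + r) =
      Nat.digits m r ++ List.replicate (k - (Nat.digits m r).length) 0 ++ Nat.digits m t := by
    rw [Nat.digits_append_zeroes_append_digits hb htpos]
    congr 1
    rw [Nat.add_sub_cancel' hlen]
    ring
  have hdigt : Nat.digits m t = [t] := by
    rw [Nat.digits_def' hb htpos, Nat.mod_eq_of_lt ht, Nat.div_eq_of_lt ht, Nat.digits_zero]
  have hpos : t * m ^ k + r ≠ 0 := by positivity
  have hE : eCount m w (t * m ^ k + r) = occCount w ((Nat.digits m r).reverse) := by
    unfold eCount baseExp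
    rw [if_neg hpos, hdig, hdigt]
    simp only [List.reverse_append, List.reverse_cons, List.reverse_nil, List.nil_append,
      List.reverse_replicate, List.singleton_append]
    rw [occCount_cons_s2 t _ (not_prefix_of_head_ne t _ hne (Ne.symm ht')),
      occCount_zeros hne hhead]
  rcases Nat.eq_zero_or_pos r with rfl | hrpos
  · have h0 : occCount w [0] = occCount w [] := by
      have h1 : ([0] : List ℕ) = List.replicate 1 0 ++ [] := rfl
      rw [h1, occCount_zeros hne hhead]
    unfold aSeq
    rw [hE]
    simp only [Nat.digits_zero, List.reverse_nil]
    unfold eCount baseExp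
    rw [if_pos rfl, h0]
  · unfold aSeq
    rw [hE]
    unfold eCount baseExp
    rw [if_neg hrpos.ne']
end

section
/- Let p be a prime and w a word over {0,...,p-1} with |w| ≥ 2. If v is a finite word such that v^{p+1} is a prefix of the sequence (a_{p;w}(n))_{n≥0} and |v| ≥ 2·p^{|w|}, then p^{|w|-1} divides |v|. -/
lemma occCount_eq_sum (w x : List ℕ) :
    occCount w x = ∑ i ∈ Finset.range (x.length + 1), (if w <+: x.drop i then 1 else 0) := by
  rw [occCount]
  induction (x.length + 1) with
  | zero => simp
  | succ n ih => rw [List.range_succ, List.countP_append, Finset.sum_range_succ, ih]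
                 simp [List.countP_cons]

lemma occCount_zero_of_short {w x : List ℕ} (h : x.length < w.length) : occCount w x = 0 := by
  rw [occCount_eq_sum]
  apply Finset.sum_eq_zero
  intro i hi
  rw [if_neg]
  intro hpre
  have := hpre.length_le
  simp [List.length_drop] at this
  omega

lemma occCount_append (w x : List ℕ) (d : ℕ) (hw : w ≠ []) :
    occCount w (x ++ [d]) = occCount w x +
      (if w.length ≤ x.length + 1 ∧ w = (x ++ [d]).drop (x.length + 1 - w.length) then 1 else 0) := by
  have hlen : (x ++ [d]).length = x.length + 1 := by simp
  rw [occCount_eq_sum, occCount_eq_sum, hlen]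
  rw [Finset.sum_range_succ (n := x.length + 1)]
  have hlast : (if w <+: (x ++ [d]).drop (x.length + 1) then 1 else 0) = 0 := by
    rw [if_neg]
    intro hpre
    have := hpre.length_le
    simp at this
    exact hw this
  rw [hlast, add_zero]
  by_cases hk : w.length ≤ x.length + 1
  · set i₀ := x.length + 1 - w.length with hi₀
    have hi₀mem : i₀ ∈ Finset.range (x.length + 1) := by
      simp only [Finset.mem_range]
      have : 1 ≤ w.length := Nat.one_le_iff_ne_zero.mpr (by simpa using hw)
      omega
    rw [← Finset.add_sum_erase _ _ hi₀mem, ← Finset.add_sum_erase _ _ hi₀mem]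
    have hcongr : ∀ i ∈ (Finset.range (x.length + 1)).erase i₀,
        (if w <+: (x ++ [d]).drop i then 1 else 0) = (if w <+: x.drop i then 1 else 0) := by
      intro i hi
      rw [Finset.mem_erase, Finset.mem_range] at hi
      obtain ⟨hne, hilt⟩ := hi
      by_cases hle : i + w.length ≤ x.length
      · -- both sides agree
        have hdrop : (x ++ [d]).drop i = x.drop i ++ [d] := by
          rw [List.drop_append_of_le_length]; omega
        rw [hdrop]
        congr 1
        rw [List.prefix_iff_eq_take, List.prefix_iff_eq_take, List.take_append_of_le_length]
        simp [List.length_drop]; omega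
      · -- both false
        have h1 : ¬ (w <+: (x ++ [d]).drop i) := by
          intro hpre
          have := hpre.length_le
          simp [List.length_drop] at this
          omega
        have h2 : ¬ (w <+: x.drop i) := by
          intro hpre
          have := hpre.length_le
          simp [List.length_drop] at this
          omega
        rw [if_neg h1, if_neg h2]
    rw [Finset.sum_congr rfl hcongr]
    have hxi₀ : (if w <+: x.drop i₀ then 1 else 0) = 0 := by
      rw [if_neg]
      intro hpre
      have := hpre.length_le
      have h1 : 1 ≤ w.length := Nat.one_le_iff_ne_zero.mpr (by simpa using hw)
      simp [List.length_drop] at this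
      omega
    have hyi₀ : (if w <+: (x ++ [d]).drop i₀ then 1 else 0)
        = (if w.length ≤ x.length + 1 ∧ w = (x ++ [d]).drop i₀ then 1 else 0) := by
      have hdlen : ((x ++ [d]).drop i₀).length = w.length := by
        simp [List.length_drop]; omega
      congr 1
      rw [List.prefix_iff_eq_take, eq_iff_iff]
      constructor
      · intro h; exact ⟨hk, by rwa [← hdlen, List.take_length] at h⟩
      · intro ⟨_, h⟩; rw [← hdlen, List.take_length]; exact h
    rw [hxi₀, hyi₀]
    ring
  · have hind : (if w.length ≤ x.length + 1 ∧ w = (x ++ [d]).drop (x.length + 1 - w.length) then 1 else 0) = 0 := by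
      rw [if_neg]; intro ⟨h, _⟩; exact hk h
    rw [hind, add_zero]
    apply Finset.sum_congr rfl
    intro i hi
    have h1 : ¬ (w <+: (x ++ [d]).drop i) := by
      intro hpre; have := hpre.length_le; simp [List.length_drop] at this; omega
    have h2 : ¬ (w <+: x.drop i) := by
      intro hpre; have := hpre.length_le; simp [List.length_drop] at this
      rw [Finset.mem_range] at hi; omega
    rw [if_neg h1, if_neg h2]

lemma foldl_eq_ofDigits (p : ℕ) (w : List ℕ) : ∀ a : ℕ,
    w.foldl (fun acc d => acc * p + d) a = Nat.ofDigits p w.reverse + a * p ^ w.length := by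
  induction w with
  | nil => intro a; simp [Nat.ofDigits]
  | cons d w ih =>
    intro a
    simp only [List.foldl_cons, ih, List.reverse_cons, Nat.ofDigits_append, List.length_reverse,
      List.length_cons]
    simp [Nat.ofDigits]
    ring

lemma wordVal_eq (p : ℕ) (w : List ℕ) : wordVal p w = Nat.ofDigits p w.reverse := by
  rw [wordVal, foldl_eq_ofDigits]; simp

lemma wordVal_lt (p : ℕ) (hp : 1 < p) (w : List ℕ) (hw : ∀ d ∈ w, d < p) :
    wordVal p w < p ^ w.length := by
  rw [wordVal_eq]
  have := Nat.ofDigits_lt_base_pow_length (l := w.reverse) hp (by simpa using hw)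
  simpa using this

lemma ofDigits_inj (p : ℕ) (hp : 1 < p) : ∀ (l₁ l₂ : List ℕ), l₁.length = l₂.length →
    (∀ x ∈ l₁, x < p) → (∀ x ∈ l₂, x < p) →
    Nat.ofDigits p l₁ = Nat.ofDigits p l₂ → l₁ = l₂ := by
  intro l₁
  induction l₁ with
  | nil => intro l₂ h _ _ _; simp at h; exact (List.eq_nil_of_length_eq_zero h.symm).symm
  | cons a l ih =>
    intro l₂ hlen h1 h2 hval
    cases l₂ with
    | nil => simp at hlen
    | cons b l₂ =>
      simp only [Nat.ofDigits_cons] at hval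
      have ha : a < p := h1 a (by simp)
      have hb : b < p := h2 b (by simp)
      have hab : a = b := by
        have := congrArg (fun n => n % p) hval
        simpa [Nat.mul_add_mod, Nat.add_mul_mod_self_left, Nat.mod_eq_of_lt ha,
          Nat.mod_eq_of_lt hb] using this
      subst hab
      have hll : Nat.ofDigits p l = Nat.ofDigits p l₂ := by
        have hp0 : 0 < p := by omega
        have h3 : p * Nat.ofDigits p l = p * Nat.ofDigits p l₂ := by omega
        exact Nat.eq_of_mul_eq_mul_left hp0 h3
      rw [ih l₂ (by simpa using hlen) (fun x hx => h1 x (by simp [hx]))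
        (fun x hx => h2 x (by simp [hx])) hll]

lemma baseExp_step (p n d : ℕ) (hp : 1 < p) (hn : n ≠ 0) (hd : d < p) :
    baseExp p (p * n + d) = baseExp p n ++ [d] := by
  have hm : p * n + d ≠ 0 := by positivity
  rw [baseExp, baseExp, if_neg hm, if_neg hn]
  rw [Nat.digits_def' hp (by positivity)]
  rw [Nat.mul_add_mod, Nat.mod_eq_of_lt hd, Nat.mul_add_div (by omega), Nat.div_eq_of_lt hd,
    add_zero, List.reverse_cons]

lemma suffix_iff (p : ℕ) (hp : 1 < p) (w : List ℕ) (hw : ∀ d ∈ w, d < p)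
    (hk : w ≠ []) (m : ℕ) (hm : m ≠ 0) :
    (w.length ≤ (baseExp p m).length ∧
      w = (baseExp p m).drop ((baseExp p m).length - w.length))
    ↔ (m % p ^ w.length = wordVal p w ∧ p ^ (w.length - 1) ≤ m) := by
  set k := w.length with hkdef
  have hk1 : 1 ≤ k := by
    rw [hkdef]; exact List.length_pos_iff.mpr hk
  have hbe : baseExp p m = (Nat.digits p m).reverse := by rw [baseExp, if_neg hm]
  set D := Nat.digits p m with hD
  have hlenD : (baseExp p m).length = D.length := by rw [hbe, List.length_reverse]
  have hlen_iff : k ≤ D.length ↔ p ^ (k - 1) ≤ m := by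
    constructor
    · intro h
      have h1 : p ^ k ≤ p ^ D.length := Nat.pow_le_pow_right (by omega) h
      have h2 : p ^ D.length ≤ p * m := Nat.base_pow_length_digits_le p m hp hm
      have h3 : p * p ^ (k - 1) = p ^ k := by
        rw [← pow_succ']; congr 1; omega
      have := h1.trans h2
      rw [← h3] at this
      exact Nat.le_of_mul_le_mul_left this (by omega)
    · intro h
      have h1 : m < p ^ D.length := Nat.lt_base_pow_length_digits hp
      have h2 : p ^ (k - 1) < p ^ D.length := lt_of_le_of_lt h h1
      have := (Nat.pow_lt_pow_iff_right hp).mp h2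
      omega
  have hdropeq : (baseExp p m).drop ((baseExp p m).length - k) = (D.take k).reverse := by
    rw [hbe, List.length_reverse, ← List.reverse_take]
  have hoftake : ∀ (_ : k ≤ D.length), Nat.ofDigits p (D.take k) = m % p ^ k := by
    intro hle
    have hsplit : m = Nat.ofDigits p (D.take k) + p ^ k * Nat.ofDigits p (D.drop k) := by
      conv_lhs => rw [← Nat.ofDigits_digits p m, ← hD, ← List.take_append_drop k D]
      rw [Nat.ofDigits_append]
      congr 2
      rw [List.length_take, min_eq_left hle]
    have hlt : Nat.ofDigits p (D.take k) < p ^ k := by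
      have := Nat.ofDigits_lt_base_pow_length (l := D.take k) hp
        (fun x hx => Nat.digits_lt_base hp (List.mem_of_mem_take hx))
      have hlen : (D.take k).length = k := by rw [List.length_take]; omega
      rwa [hlen] at this
    rw [hsplit, Nat.add_mul_mod_self_left, Nat.mod_eq_of_lt hlt]
  constructor
  · rintro ⟨hle, heq⟩
    rw [hlenD] at hle
    refine ⟨?_, hlen_iff.mp hle⟩
    rw [← hoftake hle, wordVal_eq]
    rw [hdropeq] at heq
    rw [heq]
    simp
  · rintro ⟨hmod, hsz⟩
    have hle : k ≤ D.length := hlen_iff.mpr hsz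
    refine ⟨by rwa [hlenD], ?_⟩
    rw [hdropeq]
    have : w.reverse = D.take k := by
      apply ofDigits_inj p hp
      · rw [List.length_reverse, List.length_take]; omega
      · intro x hx; exact hw x (List.mem_reverse.mp hx)
      · intro x hx; exact Nat.digits_lt_base hp (List.mem_of_mem_take hx)
      · rw [← wordVal_eq, hoftake hle, hmod]
    rw [← this, List.reverse_reverse]

lemma eCount_step (p : ℕ) (w : List ℕ) (hp : 1 < p) (hw : ∀ d ∈ w, d < p)
    (hlen : 2 ≤ w.length) (n d : ℕ) (hd : d < p) :
    eCount p w (p * n + d) = eCount p w n +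
      (if (p * n + d) % p ^ w.length = wordVal p w ∧ p ^ (w.length - 1) ≤ p * n + d
        then 1 else 0) := by
  have hwne : w ≠ [] := by intro h; rw [h] at hlen; simp at hlen
  have hppow : p ≤ p ^ (w.length - 1) := by
    conv_lhs => rw [← pow_one p]
    exact Nat.pow_le_pow_right (by omega) (by omega)
  rcases Nat.eq_zero_or_pos n with hn | hn
  · subst hn
    simp only [Nat.mul_zero, Nat.zero_add]
    have h1 : eCount p w d = 0 := by
      rcases Nat.eq_zero_or_pos d with hd0 | hd0
      · subst hd0
        apply occCount_zero_of_short
        rw [baseExp]; simp; omega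
      · apply occCount_zero_of_short
        rw [baseExp, if_neg (by omega), Nat.digits_def' hp hd0,
          Nat.mod_eq_of_lt hd, Nat.div_eq_of_lt hd]
        simp; omega
    have h2 : eCount p w 0 = 0 := by
      apply occCount_zero_of_short
      rw [baseExp]; simp; omega
    rw [h1, h2, if_neg]
    rintro ⟨-, h⟩
    omega
  · have hm : p * n + d ≠ 0 := by positivity
    have hbs := baseExp_step p n d hp (by omega) hd
    have hiff := suffix_iff p hp w hw hwne (p * n + d) hm
    rw [hbs] at hiff
    simp only [List.length_append, List.length_singleton] at hiff
    simp only [eCount, hbs, occCount_append w _ d hwne]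
    congr 1
    exact if_congr hiff rfl rfl

lemma arith_iff (p : ℕ) (hp : 1 < p) (k W : ℕ) (hk : 2 ≤ k) (hW : W < p ^ k)
    (n d : ℕ) (hd : d < p) :
    ((p * n + d) % p ^ k = W ∧ p ^ (k - 1) ≤ p * n + d)
    ↔ (d = W % p ∧ n % p ^ (k - 1) = W / p ∧ p ^ (k - 2) ≤ n) := by
  set K2 := p ^ (k - 2) with hK2
  set K1 := p ^ (k - 1) with hK1
  have hK1eq : K1 = p * K2 := by
    rw [hK1, hK2, ← pow_succ']; congr 1; omega
  have hPKeq : p ^ k = p * K1 := by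
    rw [hK1, ← pow_succ']; congr 1; omega
  have hmod : (p * n + d) % p ^ k = p * (n % K1) + d := by
    have hsplit : p * n + d = p ^ k * (n / K1) + (p * (n % K1) + d) := by
      conv_lhs => rw [← Nat.div_add_mod n K1]
      rw [hPKeq]; ring
    have hlt : p * (n % K1) + d < p ^ k := by
      have h1 : n % K1 < K1 := Nat.mod_lt _ (by rw [hK1]; positivity)
      have h2 : p * (n % K1 + 1) ≤ p * K1 := Nat.mul_le_mul_left _ h1
      rw [Nat.mul_add, Nat.mul_one] at h2
      omega
    rw [hsplit, Nat.mul_add_mod, Nat.mod_eq_of_lt hlt]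
  have hsize : K1 ≤ p * n + d ↔ K2 ≤ n := by
    constructor
    · intro h
      by_contra hc
      push_neg at hc
      have h2 : p * (n + 1) ≤ p * K2 := Nat.mul_le_mul_left _ hc
      rw [Nat.mul_add, Nat.mul_one] at h2
      rw [hK1eq] at h
      omega
    · intro h
      have h2 : p * K2 ≤ p * n := Nat.mul_le_mul_left _ h
      omega
  rw [hmod, hsize]
  constructor
  · rintro ⟨h1, h2⟩
    have hdW : d = W % p := by rw [← h1, Nat.mul_add_mod, Nat.mod_eq_of_lt hd]
    have hnW : n % K1 = W / p := by rw [← h1, Nat.mul_add_div (by omega), Nat.div_eq_of_lt hd, add_zero]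
    exact ⟨hdW, hnW, h2⟩
  · rintro ⟨h1, h2, h3⟩
    refine ⟨?_, h3⟩
    have hWdm := Nat.div_add_mod W p
    rw [h1, h2]
    omega

lemma sum_eCount (p : ℕ) (w : List ℕ) (hp : 1 < p) (hw : ∀ d ∈ w, d < p)
    (hlen : 2 ≤ w.length) (n : ℕ) :
    ∑ d ∈ Finset.range p, eCount p w (p * n + d)
    = p * eCount p w n +
      (if n % p ^ (w.length - 1) = wordVal p w / p ∧ p ^ (w.length - 2) ≤ n then 1 else 0) := by
  have hW : wordVal p w < p ^ w.length := wordVal_lt p hp w hw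
  have hstep : ∀ d ∈ Finset.range p, eCount p w (p * n + d)
      = eCount p w n + (if d = wordVal p w % p ∧
          (n % p ^ (w.length - 1) = wordVal p w / p ∧ p ^ (w.length - 2) ≤ n) then 1 else 0) := by
    intro d hd
    rw [Finset.mem_range] at hd
    rw [eCount_step p w hp hw hlen n d hd]
    congr 1
    exact if_congr ((arith_iff p hp w.length (wordVal p w) hlen hW n d hd).trans
      (by tauto)) rfl rfl
  rw [Finset.sum_congr rfl hstep, Finset.sum_add_distrib, Finset.sum_const, Finset.card_range,
    smul_eq_mul]
  congr 1
  by_cases hC : n % p ^ (w.length - 1) = wordVal p w / p ∧ p ^ (w.length - 2) ≤ n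
  · rw [if_pos hC]
    have hcongr : ∀ d ∈ Finset.range p, (if d = wordVal p w % p ∧
        (n % p ^ (w.length - 1) = wordVal p w / p ∧ p ^ (w.length - 2) ≤ n) then (1:ℕ) else 0)
        = if d = wordVal p w % p then 1 else 0 := by
      intro d _
      exact if_congr (by tauto) rfl rfl
    rw [Finset.sum_congr rfl hcongr,
      Finset.sum_ite_eq' (Finset.range p) (wordVal p w % p) (fun _ => 1)]
    rw [if_pos (Finset.mem_range.mpr (Nat.mod_lt _ (by omega)))]
  · rw [if_neg hC]
    apply Finset.sum_eq_zero
    intro d _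
    rw [if_neg]
    rintro ⟨-, h⟩
    exact hC h

lemma flat_getD (v : List ℕ) : ∀ (c m : ℕ), m < c * v.length →
    ((List.replicate c v).flatten).getD m 0 = v.getD (m % v.length) 0 := by
  intro c
  induction c with
  | zero => intro m hm; simp at hm
  | succ c ih =>
    intro m hm
    have hL : 0 < v.length := by by_contra h; push_neg at h; interval_cases hl : v.length <;> omega
    rw [List.replicate_succ, List.flatten_cons]
    by_cases h : m < v.length
    · rw [List.getD_append _ _ _ _ h, Nat.mod_eq_of_lt h]
    · push_neg at h
      rw [List.getD_append_right _ _ _ _ h, ih (m - v.length) (by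
        have : (c + 1) * v.length = c * v.length + v.length := by ring
        omega)]
      congr 1
      rw [Nat.mod_eq_sub_mod h]

lemma flat_len (c : ℕ) (v : List ℕ) : ((List.replicate c v).flatten).length = c * v.length := by
  rw [List.length_flatten, List.map_replicate, List.sum_replicate, smul_eq_mul]

theorem stmt7 (p : ℕ) (hp : p.Prime) (w : List ℕ)
    (hw : ∀ d ∈ w, d < p) (hlen : 2 ≤ w.length) (v : List ℕ)
    (hv : 2 * p ^ w.length ≤ v.length)
    (hpre : IsPrefixSeq ((List.replicate (p + 1) v).flatten) (aSeq p w)) :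
    p ^ (w.length - 1) ∣ v.length := by
  have hp2 : 2 ≤ p := hp.two_le
  set k := w.length with hk
  set L := v.length with hLdef
  set W := wordVal p w with hWdef
  set K1 := p ^ (k - 1) with hK1
  have hpk : p ^ k = p * K1 := by rw [hK1, ← pow_succ']; congr 1; omega
  have hpkpos : 0 < p ^ k := by positivity
  have hL0 : 0 < L := by omega
  have hWlt : W < p ^ k := wordVal_lt p (by omega) w hw
  have hWp : W / p < K1 := by
    rw [Nat.div_lt_iff_lt_mul (by omega : 0 < p), Nat.mul_comm, ← hpk]
    exact hWlt
  set n₀ := W / p + K1 with hn₀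
  have hn₀mod : n₀ % K1 = W / p := by
    rw [hn₀, Nat.add_mod_right, Nat.mod_eq_of_lt hWp]
  have hK2n₀ : p ^ (k - 2) ≤ n₀ := by
    have h : p ^ (k - 2) ≤ K1 := by
      rw [hK1]; exact Nat.pow_le_pow_right (by omega) (by omega)
    omega
  have hbound : p * n₀ + p ≤ L := by
    have h1 : W / p + 1 ≤ K1 := hWp
    have h2 : p * (W / p + 1) ≤ p * K1 := Nat.mul_le_mul_left _ h1
    have h3 : p * n₀ = p * (W / p) + p * K1 := by rw [hn₀]; ring
    rw [Nat.mul_add, Nat.mul_one] at h2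
    omega
  have hflatlen : ((List.replicate (p + 1) v).flatten).length = (p + 1) * L :=
    flat_len _ _
  have ha : ∀ m, m < (p + 1) * L → aSeq p w m = v.getD (m % L) 0 := by
    intro m hm
    rw [hpre m (by rw [hflatlen]; exact hm), flat_getD v (p + 1) m hm]
  have hper : ∀ m, m < L → aSeq p w (m + p * L) = aSeq p w m := by
    intro m hm
    have he : (p + 1) * L = p * L + L := by ring
    rw [ha _ (by omega), ha _ (by omega), Nat.add_mul_mod_self_right]
  have key : ∀ n, p ^ (k - 2) ≤ n →
      (∑ d ∈ Finset.range p, aSeq p w (p * n + d)) % p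
      = (if n % K1 = W / p then 1 else 0) := by
    intro n hn
    have h1 : (∑ d ∈ Finset.range p, aSeq p w (p * n + d)) % p
        = (∑ d ∈ Finset.range p, eCount p w (p * n + d)) % p := by
      rw [Finset.sum_nat_mod (Finset.range p) p (fun d => eCount p w (p * n + d))]
      rfl
    have h2 : (if n % K1 = W / p ∧ p ^ (k - 2) ≤ n then (1:ℕ) else 0)
        = (if n % K1 = W / p then 1 else 0) := if_congr (by tauto) rfl rfl
    rw [h1, sum_eCount p w (by omega) hw hlen n, Nat.mul_add_mod, h2,
      Nat.mod_eq_of_lt (by split <;> omega)]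
  have hsums : (∑ d ∈ Finset.range p, aSeq p w (p * n₀ + d))
      = ∑ d ∈ Finset.range p, aSeq p w (p * (n₀ + L) + d) := by
    apply Finset.sum_congr rfl
    intro d hd
    rw [Finset.mem_range] at hd
    have he : p * (n₀ + L) + d = (p * n₀ + d) + p * L := by ring
    rw [he, hper (p * n₀ + d) (by omega)]
  have h1 := key n₀ hK2n₀
  have h2 := key (n₀ + L) (by omega)
  rw [hsums, h2, if_pos hn₀mod] at h1
  have h3 : (n₀ + L) % K1 = W / p := by
    by_contra hcon
    rw [if_neg hcon] at h1
    omega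
  have hmodeq : L ≡ 0 [MOD K1] := by
    have h4 : n₀ + L ≡ n₀ + 0 [MOD K1] := by
      unfold Nat.ModEq
      rw [add_zero, h3, hn₀mod]
    exact Nat.ModEq.add_left_cancel' n₀ h4
  exact Nat.modEq_zero_iff_dvd.mp hmodeq
end

section
/- For a prime p ≥ 3, the sequence (a_{p;0}(n))_{n≥0} has no prefix of the form vv with |v| ≥ p^2; consequently it is not purely morphic. -/
/-- Length of the image under the morphism `φ` of the first `n` letters of `s`. -/
def morphPrefixLen (φ : ℕ → List ℕ) (s : ℕ → ℕ) (n : ℕ) : ℕ :=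
  (Finset.range n).sum fun j => (φ (s j)).length

/-- The infinite sequence `s` is a fixed point of the morphism `φ` (extended by
concatenation to infinite words). -/
def IsMorphFixedPoint (φ : ℕ → List ℕ) (s : ℕ → ℕ) : Prop :=
  ∀ n : ℕ, ∀ i < (φ (s n)).length,
    s (morphPrefixLen φ s n + i) = (φ (s n)).getD i 0

/-- The sequence `s` over the alphabet `{0,...,p-1}` is purely morphic: it is a fixed
point of a non-erasing morphism of `{0,...,p-1}*`, prolongable on the first letter. -/
def PurelyMorphic (p : ℕ) (s : ℕ → ℕ) : Prop :=
  ∃ φ : ℕ → List ℕ,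
    (∀ c < p, φ c ≠ [] ∧ ∀ d ∈ φ c, d < p) ∧
    2 ≤ (φ (s 0)).length ∧
    IsMorphFixedPoint φ s

/-!
Away from `n = 0`, `a_{p;0}(n)` is the number `z n` of zero digits of `n` reduced mod `p`, and
`z (p q) = z q + 1`, `z (p q + r) = z q` for `0 < r < p`. A square prefix `v v` with `|v| = L ≥ p²`
gives `z (n + L) ≡ z n` for `0 < n < L`. Comparing `n = p - (L mod p)` with `n = p` yields `2 ≡ 0`
unless `p ∣ L`; for `L = p Λ` the relation descends along `n = p q + 1` to `z (q + Λ) ≡ z q` for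
`q < Λ`, so `p ∣ Λ` as well, and then `q = 0, 1` yield `1 ≡ 0`.

If a fixed point of a non-erasing morphism `φ` with `|φ (s 0)| ≥ 2` starts with a square `w w`, it
also starts with the strictly longer square `φ(w) φ(w)`. The sequence `a_{p;0}` starts with the
square `(1 0 ⋯ 0)(1 0 ⋯ 0)`, so being purely morphic would give it a square prefix of length `≥ p²`.
-/

def zeroDigitCount (p n : ℕ) : ℕ := (Nat.digits p n).count 0

section ZeroDigits

variable {p : ℕ}

lemma zeroDigitCount_of_lt {n : ℕ} (hn : n < p) : zeroDigitCount p n = 0 := by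
  rcases n.eq_zero_or_pos with rfl | hn0
  · simp [zeroDigitCount]
  · simp [zeroDigitCount, Nat.digits_of_lt p n hn0.ne' hn, hn0.ne']

lemma zeroDigitCount_mul_add {r : ℕ} (q : ℕ) (hr0 : 0 < r) (hr : r < p) :
    zeroDigitCount p (p * q + r) = zeroDigitCount p q := by
  rw [zeroDigitCount, add_comm, Nat.digits_add p (by omega) r q hr (Or.inl hr0.ne'),
    List.count_cons_of_ne hr0.ne', zeroDigitCount]

lemma zeroDigitCount_mul (hp : 1 < p) {q : ℕ} (hq : 0 < q) :
    zeroDigitCount p (p * q) = zeroDigitCount p q + 1 := by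
  rw [zeroDigitCount, ← zero_add (p * q), Nat.digits_add p hp 0 q (by omega) (Or.inr hq.ne'),
    List.count_cons_self, zeroDigitCount]

lemma zeroDigitCount_self (hp : 1 < p) : zeroDigitCount p p = 1 := by
  simpa [zeroDigitCount_of_lt hp] using zeroDigitCount_mul hp one_pos

lemma dvd_of_zeroDigitCount_shift (hp : 3 ≤ p) {L : ℕ} (hL : p ≤ L)
    (h : ∀ n, 0 < n → n < L → (zeroDigitCount p (n + L) : ZMod p) = zeroDigitCount p n) :
    p ∣ L := by
  obtain ⟨q, d, rfl, hd⟩ : ∃ q d, L = p * q + d ∧ d < p :=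
    ⟨L / p, L % p, (Nat.div_add_mod L p).symm, Nat.mod_lt L (by omega)⟩
  rcases d.eq_zero_or_pos with rfl | hd0
  · exact ⟨q, rfl⟩
  have hq : 0 < q := Nat.pos_of_ne_zero (by rintro rfl; omega)
  have hpq : p ≤ p * q := Nat.le_mul_of_pos_right p hq
  have hsucc : p * (q + 1) = p * q + p := mul_add_one p q
  set c := ((zeroDigitCount p (q + 1) : ℕ) : ZMod p)
  have hc1 : c + 1 = 0 := by
    have := h (p - d) (by omega) (by omega)
    rwa [show p - d + (p * q + d) = p * (q + 1) by omega, zeroDigitCount_mul (by omega)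
      q.succ_pos, zeroDigitCount_of_lt (n := p - d) (by omega), Nat.cast_add, Nat.cast_one,
      Nat.cast_zero] at this
  have hc2 : c = 1 := by
    have := h p (by omega) (by omega)
    rwa [show p + (p * q + d) = p * (q + 1) + d by omega, zeroDigitCount_mul_add _ hd0 hd,
      zeroDigitCount_self (by omega), Nat.cast_one] at this
  have h2 : ((2 : ℕ) : ZMod p) = 0 := by
    push_cast
    linear_combination hc1 - hc2
  have := Nat.le_of_dvd two_pos ((ZMod.natCast_eq_zero_iff 2 p).mp h2)
  omega

lemma zeroDigitCount_shift_of_shift_mul (hp : 1 < p) {Λ : ℕ}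
    (h : ∀ n, 0 < n → n < p * Λ →
      (zeroDigitCount p (n + p * Λ) : ZMod p) = zeroDigitCount p n) (q : ℕ) (hq : q < Λ) :
    (zeroDigitCount p (q + Λ) : ZMod p) = zeroDigitCount p q := by
  have hlt : p * q + 1 < p * Λ := by nlinarith
  simpa only [show p * q + 1 + p * Λ = p * (q + Λ) + 1 by ring,
    zeroDigitCount_mul_add _ one_pos hp] using h (p * q + 1) (by omega) hlt

lemma not_zeroDigitCount_shift_of_dvd (hp : 1 < p) {Λ : ℕ} (hΛ : 1 < Λ) (hdvd : p ∣ Λ) :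
    ¬ ∀ q < Λ, (zeroDigitCount p (q + Λ) : ZMod p) = zeroDigitCount p q := by
  obtain ⟨Λ', rfl⟩ := hdvd
  have hΛ' : 0 < Λ' := Nat.pos_of_ne_zero (by rintro rfl; simp at hΛ)
  intro h
  have h0 := h 0 (by omega)
  have h1 := h 1 hΛ
  rw [zero_add, zeroDigitCount_mul hp hΛ', zeroDigitCount_of_lt (by omega : 0 < p)] at h0
  rw [add_comm, zeroDigitCount_mul_add _ one_pos hp, zeroDigitCount_of_lt hp] at h1
  have h10 : ((1 : ℕ) : ZMod p) = 0 := by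
    push_cast at h0 h1 ⊢
    linear_combination h0 - h1
  have := Nat.le_of_dvd one_pos ((ZMod.natCast_eq_zero_iff 1 p).mp h10)
  omega

lemma not_zeroDigitCount_shift (hp : 3 ≤ p) {L : ℕ} (hL : p ^ 2 ≤ L) :
    ¬ ∀ n, 0 < n → n < L → (zeroDigitCount p (n + L) : ZMod p) = zeroDigitCount p n := by
  intro h
  obtain ⟨Λ, rfl⟩ := dvd_of_zeroDigitCount_shift hp (le_trans (by nlinarith) hL) h
  have hΛ : p ≤ Λ := Nat.le_of_mul_le_mul_left (by nlinarith) (by omega : 0 < p)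
  have hshift := zeroDigitCount_shift_of_shift_mul (by omega) h
  exact not_zeroDigitCount_shift_of_dvd (by omega) (by omega)
    (dvd_of_zeroDigitCount_shift hp hΛ fun n _ hn => hshift n hn) hshift

end ZeroDigits

lemma occCount_singleton (a : ℕ) (x : List ℕ) : occCount [a] x = x.count a := by
  induction x with
  | nil => simp [occCount]
  | cons b t ih =>
    rw [occCount, List.length_cons, List.range_succ_eq_map, List.countP_cons, List.countP_map,
      List.count_cons, ← ih, occCount]
    simp only [Function.comp_def, List.drop_succ_cons, List.drop_zero, List.cons_prefix_cons,
      List.nil_prefix, and_true]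
    rcases eq_or_ne a b with rfl | hab
    · simp
    · simp [hab, hab.symm]

lemma aSeq_zero_of_ne_zero {p n : ℕ} (hn : n ≠ 0) : aSeq p [0] n = zeroDigitCount p n % p := by
  rw [aSeq, eCount, baseExp, if_neg hn, occCount_singleton, List.count_reverse, zeroDigitCount]

lemma aSeq_zero_zero (p : ℕ) : aSeq p [0] 0 = 1 % p := rfl

lemma aSeq_zero_add_self {p n : ℕ} (hp : 1 < p) (hn : n < p) :
    aSeq p [0] (n + p) = aSeq p [0] n := by
  rw [aSeq_zero_of_ne_zero (by omega)]
  rcases n.eq_zero_or_pos with rfl | hn0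
  · rw [zero_add, zeroDigitCount_self hp, aSeq_zero_zero]
  · have := zeroDigitCount_mul_add 1 hn0 hn
    rw [mul_one, zeroDigitCount_of_lt hp] at this
    rw [aSeq_zero_of_ne_zero hn0.ne', add_comm, this, zeroDigitCount_of_lt hn]

lemma aSeq_zero_not_shift {p L : ℕ} (hp : 3 ≤ p) (hL : p ^ 2 ≤ L) :
    ¬ ∀ n < L, aSeq p [0] (n + L) = aSeq p [0] n := by
  refine fun h => not_zeroDigitCount_shift hp hL fun n hn0 hn => ?_
  have := h n hn
  rwa [aSeq_zero_of_ne_zero (by omega), aSeq_zero_of_ne_zero hn0.ne',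
    ← ZMod.natCast_eq_natCast_iff'] at this

section Morphism

variable {φ : ℕ → List ℕ} {s : ℕ → ℕ}

lemma isPrefixSeq_iff_map_range {v : List ℕ} :
    IsPrefixSeq v s ↔ (List.range v.length).map s = v := by
  refine ⟨fun h => List.ext_getElem (by simp) fun i _ hi => ?_, fun h n hn => ?_⟩
  · simp [h i hi, hi]
  · rw [← h, List.getD_eq_getElem _ _ (by simpa using hn)]
    simp

lemma isPrefixSeq_map_range (s : ℕ → ℕ) (n : ℕ) : IsPrefixSeq ((List.range n).map s) s :=
  isPrefixSeq_iff_map_range.mpr (by simp)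

lemma isPrefixSeq_append_self_iff {v : List ℕ} :
    IsPrefixSeq (v ++ v) s ↔ IsPrefixSeq v s ∧ ∀ n < v.length, s (n + v.length) = s n := by
  refine ⟨fun h => ⟨fun n hn => ?_, fun n hn => ?_⟩, fun ⟨hv, hper⟩ n hn => ?_⟩
  · rw [h n (by rw [List.length_append]; omega), List.getD_append _ _ _ _ hn]
  · rw [h n (by rw [List.length_append]; omega),
      h (n + v.length) (by rw [List.length_append]; omega),
      List.getD_append_right _ _ _ _ (by omega), List.getD_append _ _ _ _ hn, Nat.add_sub_cancel]
  · rw [List.length_append] at hn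
    rcases Nat.lt_or_ge n v.length with h | h
    · rw [List.getD_append _ _ _ _ h, hv n h]
    · rw [List.getD_append_right _ _ _ _ h, ← hv _ (by omega), ← hper (n - v.length) (by omega),
        Nat.sub_add_cancel h]

lemma IsPrefixSeq.exists_eq_of_mem {v : List ℕ} (hv : IsPrefixSeq v s) {d : ℕ} (hd : d ∈ v) :
    ∃ n, s n = d := by
  rw [← isPrefixSeq_iff_map_range.mp hv, List.mem_map] at hd
  obtain ⟨n, -, hn⟩ := hd
  exact ⟨n, hn⟩

lemma morphPrefixLen_eq_length_flatMap (φ : ℕ → List ℕ) (s : ℕ → ℕ) (n : ℕ) :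
    morphPrefixLen φ s n = (((List.range n).map s).flatMap φ).length := by
  induction n with
  | zero => rfl
  | succ n ih => simp [morphPrefixLen, Finset.sum_range_succ, List.range_succ, ← ih]

lemma IsMorphFixedPoint.isPrefixSeq_flatMap (hfix : IsMorphFixedPoint φ s) {v : List ℕ}
    (hv : IsPrefixSeq v s) : IsPrefixSeq (v.flatMap φ) s := by
  rw [← isPrefixSeq_iff_map_range.mp hv]
  induction v.length with
  | zero => intro n hn; simp at hn
  | succ m ih =>
    intro n hn
    simp only [List.range_succ, List.map_append, List.map_cons, List.map_nil,
      List.flatMap_append, List.flatMap_cons, List.flatMap_nil, List.append_nil,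
      List.length_append] at hn ⊢
    rcases Nat.lt_or_ge n (((List.range m).map s).flatMap φ).length with h | h
    · rw [List.getD_append _ _ _ _ h, ih n h]
    · rw [List.getD_append_right _ _ _ _ h]
      have := hfix m (n - (((List.range m).map s).flatMap φ).length) (by omega)
      rwa [morphPrefixLen_eq_length_flatMap, Nat.add_sub_cancel' h] at this

lemma length_lt_length_flatMap {a : ℕ} {t : List ℕ} (ha : 2 ≤ (φ a).length)
    (ht : ∀ d ∈ t, φ d ≠ []) : (a :: t).length < ((a :: t).flatMap φ).length := by
  have : t.length ≤ (t.flatMap φ).length := by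
    rw [List.length_flatMap]
    refine (List.length_map _).symm.le.trans (List.length_le_sum_of_one_le _ ?_)
    simp only [List.mem_map]
    rintro _ ⟨d, hd, rfl⟩
    exact List.length_pos_iff.mpr (ht d hd)
  simp only [List.flatMap_cons, List.length_append, List.length_cons]
  omega

theorem IsMorphFixedPoint.exists_square_prefix_length_ge (hfix : IsMorphFixedPoint φ s)
    (hne : ∀ n, φ (s n) ≠ []) (h2 : 2 ≤ (φ (s 0)).length) {w : List ℕ} (hw : w ≠ [])
    (hww : IsPrefixSeq (w ++ w) s) (N : ℕ) : ∃ v, N ≤ v.length ∧ IsPrefixSeq (v ++ v) s := by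
  suffices ∀ N, ∃ v, N < v.length ∧ IsPrefixSeq (v ++ v) s from
    (this N).imp fun _ h => ⟨h.1.le, h.2⟩
  intro N
  induction N with
  | zero => exact ⟨w, List.length_pos_iff.mpr hw, hww⟩
  | succ N ih =>
    obtain ⟨v, hlen, hvv⟩ := ih
    refine ⟨v.flatMap φ, ?_, by simpa using hfix.isPrefixSeq_flatMap hvv⟩
    obtain ⟨a, t, rfl⟩ := List.exists_cons_of_length_pos (by omega : 0 < v.length)
    have hv := (isPrefixSeq_append_self_iff.mp hvv).1
    have ha : s 0 = a := hv 0 (by simp)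
    have ht : ∀ d ∈ t, φ d ≠ [] := fun d hd => by
      obtain ⟨n, rfl⟩ := hv.exists_eq_of_mem (List.mem_cons_of_mem a hd)
      exact hne n
    have := length_lt_length_flatMap (ha ▸ h2) ht
    omega

end Morphism

theorem stmt16_general (p : ℕ) (hp3 : 3 ≤ p) :
    (∀ v : List ℕ, p ^ 2 ≤ v.length → ¬ IsPrefixSeq (v ++ v) (aSeq p [0])) ∧
    ¬ PurelyMorphic p (aSeq p [0]) := by
  have hno_square : ∀ v : List ℕ, p ^ 2 ≤ v.length → ¬ IsPrefixSeq (v ++ v) (aSeq p [0]) :=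
    fun v hv hvv => aSeq_zero_not_shift hp3 hv (isPrefixSeq_append_self_iff.mp hvv).2
  refine ⟨hno_square, fun ⟨φ, hφ, hφ2, hfix⟩ => ?_⟩
  have hne : ∀ n, φ (aSeq p [0] n) ≠ [] := fun n => (hφ _ (Nat.mod_lt _ (by omega))).1
  have hsquare : IsPrefixSeq ((List.range p).map (aSeq p [0]) ++ (List.range p).map (aSeq p [0]))
      (aSeq p [0]) := by
    refine isPrefixSeq_append_self_iff.mpr ⟨isPrefixSeq_map_range _ p, fun n hn => ?_⟩
    rw [List.length_map, List.length_range] at hn ⊢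
    exact aSeq_zero_add_self (by omega) hn
  obtain ⟨v, hv, hvv⟩ := hfix.exists_square_prefix_length_ge hne hφ2
    (List.ne_nil_of_length_pos (by rw [List.length_map, List.length_range]; omega)) hsquare (p ^ 2)
  exact hno_square v hv hvv

theorem stmt16 (p : ℕ) (hp : p.Prime) (hp3 : 3 ≤ p) :
    (∀ v : List ℕ, p ^ 2 ≤ v.length → ¬ IsPrefixSeq (v ++ v) (aSeq p [0])) ∧
    ¬ PurelyMorphic p (aSeq p [0]) :=
  stmt16_general p hp3
end
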